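/- Every 3-dimensional Novikov superalgebra over ℂ is of type N, i.e., is also a Novikov algebra under the same product with the grading forgotten. -/
import Mathlib

/-- A Novikov superalgebra over ℂ: a ℤ₂-graded vector space `V = A 0 ⊕ A 1`
with a bilinear product respecting the grading, satisfying the graded
left-symmetry and graded right-commutativity identities. -/
structure NovikovSuperAlgebra (V : Type*) [AddCommGroup V] [Module ℂ V] where
  mul : V →ₗ[ℂ] V →ₗ[ℂ] V
  grading : ZMod 2 → Submodule ℂ V
  spanning : ∀ x : V, ∃ x0 ∈ grading 0, ∃ x1 ∈ grading 1, x = x0 + x1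
  indep : ∀ x : V, x ∈ grading 0 → x ∈ grading 1 → x = 0
  mul_mem : ∀ i j : ZMod 2, ∀ u ∈ grading i, ∀ v ∈ grading j, mul u v ∈ grading (i + j)
  super_left_sym : ∀ i j : ZMod 2, ∀ u ∈ grading i, ∀ v ∈ grading j, ∀ w : V,
    mul (mul u v) w - mul u (mul v w)
      = ((-1 : ℂ) ^ (i.val * j.val)) • (mul (mul v u) w - mul v (mul u w))
  super_right_comm : ∀ i j : ZMod 2, ∀ u ∈ grading i, ∀ v ∈ grading j, ∀ w : V,
    mul (mul w u) v = ((-1 : ℂ) ^ (i.val * j.val)) • mul (mul w v) u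

/-- The (ungraded) Novikov algebra identities for a bilinear product. -/
def IsNovikovMul {V : Type*} [AddCommGroup V] [Module ℂ V]
    (mul : V →ₗ[ℂ] V →ₗ[ℂ] V) : Prop :=
  (∀ x y z : V, mul (mul x y) z - mul x (mul y z) = mul (mul y x) z - mul y (mul x z)) ∧
  (∀ x y z : V, mul (mul z x) y = mul (mul z y) x)

/-- Supercommutator of elements of parities `i`, `j`. -/
def sbr {V : Type*} [AddCommGroup V] [Module ℂ V]
    (mul : V →ₗ[ℂ] V →ₗ[ℂ] V) (i j : ZMod 2) (u v : V) : V :=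
  mul u v - ((-1 : ℂ) ^ (i.val * j.val)) • mul v u

/-- In a submodule of rank at most one, any two elements are proportional. -/
lemma depLe1 {V : Type*} [AddCommGroup V] [Module ℂ V] [FiniteDimensional ℂ V]
    (W : Submodule ℂ V) (hW : Module.finrank ℂ W ≤ 1)
    {u v : V} (hu : u ∈ W) (hv : v ∈ W) : u = 0 ∨ ∃ c : ℂ, v = c • u := by
  rcases eq_or_ne u 0 with h | h
  · exact Or.inl h
  · right
    have hU : (⟨u, hu⟩ : W) ≠ 0 := by simp [Submodule.mk_eq_zero, h]
    have h1 : Module.finrank ℂ (Submodule.span ℂ {(⟨u, hu⟩ : W)}) = 1 :=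
      finrank_span_singleton hU
    have h2 : Submodule.span ℂ {(⟨u, hu⟩ : W)} = ⊤ := by
      apply Submodule.eq_top_of_finrank_eq
      have hle := Submodule.finrank_le (Submodule.span ℂ {(⟨u, hu⟩ : W)})
      omega
    have hvmem : (⟨v, hv⟩ : W) ∈ Submodule.span ℂ {(⟨u, hu⟩ : W)} := by
      rw [h2]; trivial
    obtain ⟨c, hc⟩ := Submodule.mem_span_singleton.mp hvmem
    refine ⟨c, ?_⟩
    have := congrArg (Subtype.val) hc
    simpa using this.symm

/-- every 3-dimensional Novikov superalgebra over ℂ is of type N. -/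
theorem dim3_type_N {V : Type*} [AddCommGroup V] [Module ℂ V] [FiniteDimensional ℂ V]
    (hdim : Module.finrank ℂ V = 3) (N : NovikovSuperAlgebra V) :
    IsNovikovMul N.mul := by
  set m := N.mul with hm
  -- a vector equal to its own negative is zero
  have half : ∀ X : V, X = -X → X = 0 := by
    intro X hX
    have h2 : (2 : ℂ) • X = 0 := by
      rw [two_smul]; nth_rewrite 1 [hX]; simp
    simpa [smul_eq_zero] using h2
  -- specialized super identities
  have rc11 : ∀ u ∈ N.grading 1, ∀ v ∈ N.grading 1, ∀ w : V,
      m (m w u) v = - m (m w v) u := by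
    intro u hu v hv w
    have h := N.super_right_comm 1 1 u hu v hv w
    simpa [ZMod.val_one] using h
  have ls11 : ∀ u ∈ N.grading 1, ∀ v ∈ N.grading 1, ∀ w : V,
      m (m u v) w - m u (m v w) = -(m (m v u) w - m v (m u w)) := by
    intro u hu v hv w
    have h := N.super_left_sym 1 1 u hu v hv w
    simpa [ZMod.val_one] using h
  have rc10 : ∀ u ∈ N.grading 1, ∀ p ∈ N.grading 0, ∀ w : V,
      m (m w u) p = m (m w p) u := by
    intro u hu p hp w
    have h := N.super_right_comm 1 0 u hu p hp w
    simpa [ZMod.val_one] using h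
  -- membership helpers
  have h110 : (1 + 1 : ZMod 2) = 0 := by decide
  have mm11 : ∀ a ∈ N.grading 1, ∀ b ∈ N.grading 1, m a b ∈ N.grading 0 := by
    intro a ha b hb
    have := N.mul_mem 1 1 a ha b hb
    rwa [h110] at this
  have mm01 : ∀ p ∈ N.grading 0, ∀ b ∈ N.grading 1, m p b ∈ N.grading 1 := by
    intro p hp b hb
    have := N.mul_mem 0 1 p hp b hb
    rwa [zero_add] at this
  have mm10 : ∀ a ∈ N.grading 1, ∀ p ∈ N.grading 0, m a p ∈ N.grading 1 := by
    intro a ha p hp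
    have := N.mul_mem 1 0 a ha p hp
    rwa [add_zero] at this
  -- rank bookkeeping
  have hsup : N.grading 0 ⊔ N.grading 1 = ⊤ := by
    rw [eq_top_iff]
    intro x _
    obtain ⟨x0, h0, x1, h1, rfl⟩ := N.spanning x
    exact Submodule.add_mem_sup h0 h1
  have hinf : N.grading 0 ⊓ N.grading 1 = ⊥ := by
    rw [eq_bot_iff]
    intro x hx
    simpa using N.indep x hx.1 hx.2
  have hsum : Module.finrank ℂ (N.grading 0) + Module.finrank ℂ (N.grading 1) = 3 := by
    have h := Submodule.finrank_sup_add_finrank_inf_eq (N.grading 0) (N.grading 1)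
    rw [hsup, hinf, finrank_top, finrank_bot, hdim] at h
    omega
  -- THE KEY REDUCTION: both quantities vanish for odd u, v
  have hG : (∀ u ∈ N.grading 1, ∀ v ∈ N.grading 1, ∀ w : V, m (m w u) v = 0) ∧
      (∀ u ∈ N.grading 1, ∀ v ∈ N.grading 1, ∀ w : V,
        m (m u v) w - m u (m v w) = 0) := by
    rcases (show Module.finrank ℂ (N.grading 0) ≤ 1 ∨
        Module.finrank ℂ (N.grading 1) ≤ 1 by omega) with hA0 | hA1
    · -- dim A₀ ≤ 1
      by_cases hZ : ∀ a ∈ N.grading 1, ∀ b ∈ N.grading 1, m a b = 0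
      · -- all odd∘odd products vanish
        constructor
        · intro u hu v hv w
          obtain ⟨w0, hw0, w1, hw1, rfl⟩ := N.spanning w
          have h1 : m w1 u = 0 := hZ w1 hw1 u hu
          have h2 : m (m w0 u) v = 0 := hZ _ (mm01 w0 hw0 u hu) v hv
          simp [map_add, LinearMap.add_apply, h1, h2]
        · intro u hu v hv w
          obtain ⟨w0, hw0, w1, hw1, rfl⟩ := N.spanning w
          have h1 : m u v = 0 := hZ u hu v hv
          have h2 : m v w1 = 0 := hZ v hv w1 hw1
          have h3 : m u (m v w0) = 0 := hZ u hu _ (mm10 v hv w0 hw0)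
          simp [map_add, h1, h2, h3]
      · -- some odd∘odd product q = x∘y is nonzero; it spans A₀
        push_neg at hZ
        obtain ⟨x, hx, y, hy, hq⟩ := hZ
        have hqA0 : m x y ∈ N.grading 0 := mm11 x hx y hy
        have scal : ∀ p ∈ N.grading 0, ∃ μ : ℂ, p = μ • m x y := by
          intro p hp
          rcases depLe1 _ hA0 hqA0 hp with h | h
          · exact absurd h hq
          · exact h
        have qy : m (m x y) y = 0 := half _ (rc11 y hy y hy x)
        have qRodd : ∀ w ∈ N.grading 1, m (m x y) w = 0 := by
          intro w hw
          obtain ⟨ν, hν⟩ := scal _ (mm11 x hx w hw)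
          have h := rc11 y hy w hw x
          rw [hν] at h
          rw [h]
          simp [qy]
        have eo : ∀ p ∈ N.grading 0, ∀ w ∈ N.grading 1, m p w = 0 := by
          intro p hp w hw
          obtain ⟨μ, rfl⟩ := scal p hp
          simp [qRodd w hw]
        have dag : ∀ u ∈ N.grading 1, ∀ a ∈ N.grading 1, ∀ b ∈ N.grading 1,
            m u (m a b) = - m a (m u b) := by
          intro u hu a ha b hb
          have h := ls11 u hu a ha b
          have z1 : m (m u a) b = 0 := eo _ (mm11 u hu a ha) b hb
          have z2 : m (m a u) b = 0 := eo _ (mm11 a ha u hu) b hb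
          linear_combination (norm := module) -h + z1 + z2
        have xq : m x (m x y) = 0 := half _ (dag x hx x hx y hy)
        have uq : ∀ u ∈ N.grading 1, m u (m x y) = 0 := by
          intro u hu
          have h := dag u hu x hx y hy
          obtain ⟨μ, hμ⟩ := scal _ (mm11 u hu y hy)
          rw [hμ] at h
          rw [h]
          simp [xq]
        have oe : ∀ u ∈ N.grading 1, ∀ p ∈ N.grading 0, m u p = 0 := by
          intro u hu p hp
          obtain ⟨μ, rfl⟩ := scal p hp
          simp [uq u hu]
        have ooe : ∀ a ∈ N.grading 1, ∀ b ∈ N.grading 1, ∀ p ∈ N.grading 0,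
            m (m a b) p = 0 := by
          intro a ha b hb p hp
          have h := rc10 b hb p hp a
          rw [h, oe a ha p hp]
          simp
        constructor
        · intro u hu v hv w
          obtain ⟨w0, hw0, w1, hw1, rfl⟩ := N.spanning w
          have h1 : m w0 u = 0 := eo w0 hw0 u hu
          have h2 : m (m w1 u) v = 0 := eo _ (mm11 w1 hw1 u hu) v hv
          simp [map_add, LinearMap.add_apply, h1, h2]
        · intro u hu v hv w
          obtain ⟨w0, hw0, w1, hw1, rfl⟩ := N.spanning w
          have t1 : m (m u v) w0 = 0 := ooe u hu v hv w0 hw0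
          have t2 : m (m u v) w1 = 0 := eo _ (mm11 u hu v hv) w1 hw1
          have t3 : m v w0 = 0 := oe v hv w0 hw0
          have t4 : m u (m v w1) = 0 := oe u hu _ (mm11 v hv w1 hw1)
          simp [map_add, t1, t2, t3, t4]
    · -- dim A₁ ≤ 1 : any two odd vectors are proportional
      constructor
      · intro u hu v hv w
        rcases depLe1 _ hA1 hu hv with rfl | ⟨c, rfl⟩
        · simp
        · have h0 : m (m w u) u = 0 := half _ (rc11 u hu u hu w)
          simp [h0]
      · intro u hu v hv w
        rcases depLe1 _ hA1 hu hv with rfl | ⟨c, rfl⟩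
        · simp
        · have h0 : m (m u u) w - m u (m u w) = 0 := half _ (ls11 u hu u hu w)
          have : m (m u (c • u)) w - m u (m (c • u) w)
              = c • (m (m u u) w - m u (m u w)) := by
            simp [map_smul, LinearMap.smul_apply, smul_sub]
          rw [this, h0, smul_zero]
  obtain ⟨G1, G2⟩ := hG
  constructor
  · intro x y z
    obtain ⟨x0, hx0, x1, hx1, rfl⟩ := N.spanning x
    obtain ⟨y0, hy0, y1, hy1, rfl⟩ := N.spanning y
    have e1 := N.super_left_sym 0 0 x0 hx0 y0 hy0 z
    have e2 := N.super_left_sym 0 1 x0 hx0 y1 hy1 z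
    have e3 := N.super_left_sym 1 0 x1 hx1 y0 hy0 z
    simp only [ZMod.val_zero, ZMod.val_one, Nat.mul_zero, Nat.zero_mul, pow_zero,
      one_smul] at e1 e2 e3
    have e4 := G2 x1 hx1 y1 hy1 z
    have e5 := G2 y1 hy1 x1 hx1 z
    simp only [map_add, LinearMap.add_apply]
    linear_combination (norm := module) e1 + e2 + e3 + e4 - e5
  · intro x y z
    obtain ⟨x0, hx0, x1, hx1, rfl⟩ := N.spanning x
    obtain ⟨y0, hy0, y1, hy1, rfl⟩ := N.spanning y
    have f1 := N.super_right_comm 0 0 x0 hx0 y0 hy0 z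
    have f2 := N.super_right_comm 1 0 x1 hx1 y0 hy0 z
    have f3 := N.super_right_comm 0 1 x0 hx0 y1 hy1 z
    simp only [ZMod.val_zero, ZMod.val_one, Nat.mul_zero, Nat.zero_mul, pow_zero,
      one_smul] at f1 f2 f3
    have f4 := G1 x1 hx1 y1 hy1 z
    have f5 := G1 y1 hy1 x1 hx1 z
    simp only [map_add, LinearMap.add_apply]
    linear_combination (norm := module) f1 + f2 + f3 + f4 - f5
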